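/- arXiv:1708.05585 — 3 statements merged into one kernel-verified Lean document; each statement's English description precedes it below -/
import Mathlib

section
/- Let f(z) = ∑_{k=0}^∞ a_k z^k be analytic on the open unit disk D with |f(z)| < 1 for all z ∈ D, and let N ≥ 1 be an integer. If 0 ≤ r < 1 satisfies (1+r)r^N ≤ (1-r)^2, then for every z ∈ ℂ with |z| = r one has |f(z)|^2 + ∑_{k=N}^∞ |a_k| r^k ≤ 1. (In particular this holds for all r ≤ R_N', where R_N' is the positive root of (1+r)r^N - (1-r)^2 = 0.) -/
/-!
Write `A = |a₀|`. Composing `f` with the disc automorphism exchanging `f 0` and `0` and applying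
the Schwarz lemma gives the Schwarz–Pick bound `|f z| ≤ (A + r) / (1 + A r)`, and at the level of
derivatives `|f' 0| ≤ 1 - A²`. For `k ≥ 1` the multisection `∑ₙ a_{kn} wⁿ` is the average of `f`
over the `k`-th roots of `w`, hence again a self-map of the disc with value `a₀` and derivative
`a_k` at `0`; so `|a_k| ≤ 1 - A²` and the tail is at most `(1 - A²) r^N / (1 - r)`. Finally
`1 - ((A + r) / (1 + A r))² = (1 - A²)(1 - r²) / (1 + A r)² ≥ (1 - A²)(1 - r) / (1 + r)`, which
dominates the tail bound exactly when `(1 + r) r^N ≤ (1 - r)²`.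
-/

open Metric Complex Set ComplexConjugate
open scoped NNReal

/-- The involutive automorphism of the unit disc exchanging `c` and `0`. -/
noncomputable def diskSwap (c w : ℂ) : ℂ := (c - w) / (1 - conj c * w)

theorem sq_norm_one_sub_conj_mul_sub_sq_norm_sub (c w : ℂ) :
    ‖1 - conj c * w‖ ^ 2 - ‖c - w‖ ^ 2 = (1 - ‖c‖ ^ 2) * (1 - ‖w‖ ^ 2) := by
  simp only [Complex.sq_norm, normSq_apply, sub_re, sub_im, mul_re, mul_im, one_re, one_im,
    conj_re, conj_im]
  ring

theorem one_sub_conj_mul_ne_zero {c w : ℂ} (hc : ‖c‖ < 1) (hw : ‖w‖ < 1) :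
    1 - conj c * w ≠ 0 := by
  have : ‖conj c * w‖ < 1 := by
    rw [norm_mul, norm_conj]
    exact mul_lt_one_of_nonneg_of_lt_one_left (norm_nonneg c) hc hw.le
  intro h
  rw [← sub_eq_zero.mp h, norm_one] at this
  exact this.false

theorem norm_diskSwap_lt_one {c w : ℂ} (hc : ‖c‖ < 1) (hw : ‖w‖ < 1) :
    ‖diskSwap c w‖ < 1 := by
  rw [diskSwap, norm_div, div_lt_one (norm_pos_iff.mpr (one_sub_conj_mul_ne_zero hc hw)),
    ← sq_lt_sq₀ (norm_nonneg _) (norm_nonneg _), ← sub_pos,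
    sq_norm_one_sub_conj_mul_sub_sq_norm_sub]
  exact mul_pos (by nlinarith [norm_nonneg c]) (by nlinarith [norm_nonneg w])

theorem diskSwap_self (c : ℂ) : diskSwap c c = 0 := by
  simp [diskSwap]

theorem hasDerivAt_diskSwap_self {c : ℂ} (hc : 1 - conj c * c ≠ 0) :
    HasDerivAt (diskSwap c) (-(1 - conj c * c)⁻¹) c := by
  have h : HasDerivAt (diskSwap c) _ c :=
    ((hasDerivAt_id' c).const_sub c).div (((hasDerivAt_id' c).const_mul (conj c)).const_sub 1) hc
  convert h using 1
  rw [sub_self, zero_mul, sub_zero, neg_one_mul, sq, neg_div, div_mul_cancel_left₀ hc]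

theorem norm_one_sub_conj_mul_self {c : ℂ} (hc : ‖c‖ ≤ 1) : ‖1 - conj c * c‖ = 1 - ‖c‖ ^ 2 := by
  rw [← normSq_eq_conj_mul_self, ← Complex.sq_norm, ← ofReal_one, ← ofReal_sub,
    norm_real, Real.norm_of_nonneg (by nlinarith [norm_nonneg c])]

theorem norm_mul_one_add_le_of_norm_diskSwap_le {c w : ℂ} {r : ℝ} (hc : ‖c‖ < 1) (hw : ‖w‖ < 1)
    (hr : r ≤ 1) (h : ‖diskSwap c w‖ ≤ r) : ‖w‖ * (1 + ‖c‖ * r) ≤ ‖c‖ + r := by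
  have hr0 : 0 ≤ r := (norm_nonneg _).trans h
  rw [diskSwap, norm_div, div_le_iff₀ (norm_pos_iff.mpr (one_sub_conj_mul_ne_zero hc hw))] at h
  have hsq : ‖c - w‖ ^ 2 ≤ r ^ 2 * ‖1 - conj c * w‖ ^ 2 := by
    rw [← mul_pow]
    exact pow_le_pow_left₀ (norm_nonneg _) h 2
  have hdist : (‖w‖ - ‖c‖) ^ 2 ≤ ‖c - w‖ ^ 2 := by
    rw [← sq_abs, norm_sub_rev]
    exact pow_le_pow_left₀ (abs_nonneg _) (abs_norm_sub_norm_le w c) 2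
  have hid := sq_norm_one_sub_conj_mul_sub_sq_norm_sub c w
  -- `(x - y)² + (1 - x²)(1 - y²) = (1 - x y)²`
  have key : (‖w‖ - ‖c‖) ^ 2 ≤ (r * (1 - ‖c‖ * ‖w‖)) ^ 2 := by
    nlinarith [mul_le_mul_of_nonneg_right hdist (by nlinarith : (0:ℝ) ≤ 1 - r ^ 2)]
  have hcw : 0 ≤ 1 - ‖c‖ * ‖w‖ := by nlinarith [norm_nonneg c, norm_nonneg w]
  linarith [(abs_le_of_sq_le_sq' key (mul_nonneg hr0 hcw)).2]

section SchwarzPick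

variable {F : ℂ → ℂ}

theorem differentiableOn_diskSwap_comp (hd : DifferentiableOn ℂ F (ball 0 1))
    (hF : MapsTo F (ball 0 1) (ball 0 1)) :
    DifferentiableOn ℂ (fun w ↦ diskSwap (F 0) (F w)) (ball 0 1) := by
  have hc : ‖F 0‖ < 1 := mem_ball_zero_iff.mp (hF (mem_ball_self one_pos))
  refine ((differentiableOn_const _).sub hd).div
    ((differentiableOn_const 1).sub ((differentiableOn_const _).mul hd)) fun w hw ↦ ?_
  exact one_sub_conj_mul_ne_zero hc (mem_ball_zero_iff.mp (hF hw))

theorem mapsTo_diskSwap_comp (hF : MapsTo F (ball 0 1) (ball 0 1)) :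
    MapsTo (fun w ↦ diskSwap (F 0) (F w)) (ball 0 1) (ball 0 1) := fun _ hw ↦
  mem_ball_zero_iff.mpr <| norm_diskSwap_lt_one
    (mem_ball_zero_iff.mp (hF (mem_ball_self one_pos))) (mem_ball_zero_iff.mp (hF hw))

theorem norm_deriv_zero_le_one_sub_sq_of_mapsTo_ball (hd : DifferentiableOn ℂ F (ball 0 1))
    (hF : MapsTo F (ball 0 1) (ball 0 1)) :
    ‖deriv F 0‖ ≤ 1 - ‖F 0‖ ^ 2 := by
  have hc : ‖F 0‖ < 1 := mem_ball_zero_iff.mp (hF (mem_ball_self one_pos))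
  have hden : 1 - conj (F 0) * F 0 ≠ 0 := one_sub_conj_mul_ne_zero hc hc
  have hpos : 0 < 1 - ‖F 0‖ ^ 2 := by nlinarith [norm_nonneg (F 0)]
  have hFd : HasDerivAt F (deriv F 0) 0 :=
    (hd.differentiableAt (ball_mem_nhds 0 one_pos)).hasDerivAt
  have hg : HasDerivAt (fun w ↦ diskSwap (F 0) (F w))
      (-(1 - conj (F 0) * F 0)⁻¹ * deriv F 0) 0 :=
    (hasDerivAt_diskSwap_self hden).comp 0 hFd
  have hle := Complex.norm_deriv_le_one_of_mapsTo_ball (differentiableOn_diskSwap_comp hd hF)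
    ((mapsTo_diskSwap_comp hF).mono_right (by rw [diskSwap_self]; exact ball_subset_closedBall))
    one_pos
  rwa [hg.deriv, norm_mul, norm_neg, norm_inv, norm_one_sub_conj_mul_self hc.le,
    inv_mul_le_iff₀ hpos, mul_one] at hle

theorem norm_mul_one_add_le_add_of_mapsTo_ball (hd : DifferentiableOn ℂ F (ball 0 1))
    (hF : MapsTo F (ball 0 1) (ball 0 1)) {z : ℂ} (hz : ‖z‖ < 1) :
    ‖F z‖ * (1 + ‖F 0‖ * ‖z‖) ≤ ‖F 0‖ + ‖z‖ := by
  have hc : ‖F 0‖ < 1 := mem_ball_zero_iff.mp (hF (mem_ball_self one_pos))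
  have hFz : ‖F z‖ < 1 := mem_ball_zero_iff.mp (hF (mem_ball_zero_iff.mpr hz))
  refine norm_mul_one_add_le_of_norm_diskSwap_le hc hFz hz.le ?_
  exact Complex.norm_le_norm_of_mapsTo_ball (differentiableOn_diskSwap_comp hd hF)
    ((mapsTo_diskSwap_comp hF).mono_right ball_subset_closedBall) (diskSwap_self _) hz

end SchwarzPick

theorem hasFPowerSeriesOnBall_ofScalars_of_hasSum {c : ℕ → ℂ} {F : ℂ → ℂ} {R : ℝ≥0}
    (hR : 0 < R) (h : ∀ w ∈ ball (0 : ℂ) R, HasSum (fun n ↦ c n * w ^ n) (F w)) :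
    HasFPowerSeriesOnBall F (FormalMultilinearSeries.ofScalars ℂ c) 0 R where
  r_le := by
    refine ENNReal.le_of_forall_nnreal_lt fun q hq ↦ ?_
    have hq : (q : ℂ) ∈ ball (0 : ℂ) R := by simpa using hq
    refine FormalMultilinearSeries.le_radius_of_tendsto _ (l := 0) ?_
    simpa [FormalMultilinearSeries.ofScalars_norm, norm_mul, norm_pow] using
      (h _ hq).summable.tendsto_atTop_zero.norm
  r_pos := by exact_mod_cast hR
  hasSum {y} hy := by
    rw [eball_coe] at hy
    simpa [FormalMultilinearSeries.ofScalars_apply_eq, mul_comm] using h y hy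

theorem sum_range_pow_pow_eq_ite {K : Type*} [Field K] {ω : K} {k : ℕ} (hω : IsPrimitiveRoot ω k)
    (m : ℕ) : ∑ j ∈ Finset.range k, (ω ^ m) ^ j = if k ∣ m then (k : K) else 0 := by
  split_ifs with hdvd
  · simp [(hω.pow_eq_one_iff_dvd m).mpr hdvd]
  · have hne : ω ^ m ≠ 1 := fun h ↦ hdvd ((hω.pow_eq_one_iff_dvd m).mp h)
    rw [geom_sum_eq hne, ← pow_mul, mul_comm, pow_mul, hω.pow_eq_one, one_pow, sub_self, zero_div]

theorem HasSum.multisection {c s : ℕ → ℂ} {ω ζ : ℂ} {k : ℕ} (hk : k ≠ 0)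
    (hω : IsPrimitiveRoot ω k)
    (h : ∀ j ∈ Finset.range k, HasSum (fun m ↦ c m * (ω ^ j * ζ) ^ m) (s j)) :
    HasSum (fun n ↦ c (k * n) * (ζ ^ k) ^ n) ((k : ℂ)⁻¹ * ∑ j ∈ Finset.range k, s j) := by
  have hfilter : HasSum (fun m ↦ c m * ζ ^ m * if k ∣ m then (k : ℂ) else 0)
      (∑ j ∈ Finset.range k, s j) := by
    convert hasSum_sum h using 2 with m
    rw [← sum_range_pow_pow_eq_ite hω, Finset.mul_sum]
    refine Finset.sum_congr rfl fun j _ ↦ ?_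
    ring
  have hvanish : ∀ m ∉ range (k * ·), c m * ζ ^ m * (if k ∣ m then (k : ℂ) else 0) = 0 :=
    fun m hm ↦ by rw [if_neg fun ⟨n, hn⟩ ↦ hm ⟨n, hn.symm⟩, mul_zero]
  have hmul := ((mul_right_injective₀ hk).hasSum_iff hvanish).mpr hfilter
  have hk' : (k : ℂ) ≠ 0 := Nat.cast_ne_zero.mpr hk
  have hterm : (fun n ↦ c (k * n) * (ζ ^ k) ^ n) =
      fun n ↦ (k : ℂ)⁻¹ * (c (k * n) * ζ ^ (k * n) * if k ∣ k * n then (k : ℂ) else 0) := by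
    funext n
    rw [if_pos (dvd_mul_right k n), pow_mul, inv_mul_eq_div, mul_div_cancel_right₀ _ hk']
  rw [hterm]
  exact hmul.mul_left _

section Coefficients

variable {c : ℕ → ℂ} {F : ℂ → ℂ}

theorem exists_hasSum_multisection_mem_ball
    (hsum : ∀ z ∈ ball (0 : ℂ) 1, HasSum (fun m ↦ c m * z ^ m) (F z))
    (hF : MapsTo F (ball 0 1) (ball 0 1)) {k : ℕ} (hk : k ≠ 0) {w : ℂ} (hw : w ∈ ball (0 : ℂ) 1) :
    ∃ S ∈ ball (0 : ℂ) 1, HasSum (fun n ↦ c (k * n) * w ^ n) S := by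
  obtain ⟨ζ, rfl⟩ := IsAlgClosed.exists_pow_nat_eq w (Nat.pos_of_ne_zero hk)
  have hζ : ‖ζ‖ < 1 := by
    rw [mem_ball_zero_iff, norm_pow] at hw
    exact (pow_lt_one_iff_of_nonneg (norm_nonneg ζ) hk).mp hw
  obtain ⟨ω, hω⟩ : ∃ ω : ℂ, IsPrimitiveRoot ω k := ⟨_, Complex.isPrimitiveRoot_exp k hk⟩
  have hmem : ∀ j : ℕ, ω ^ j * ζ ∈ ball (0 : ℂ) 1 := fun j ↦ by
    rwa [mem_ball_zero_iff, norm_mul, norm_pow, hω.norm'_eq_one hk, one_pow, one_mul]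
  refine ⟨_, ?_, (HasSum.multisection hk hω fun j _ ↦ hsum _ (hmem j))⟩
  have hk' : (0 : ℝ) < k := Nat.cast_pos.mpr (Nat.pos_of_ne_zero hk)
  rw [mem_ball_zero_iff, norm_mul, norm_inv, Complex.norm_natCast, inv_mul_lt_one₀ hk']
  calc ‖∑ j ∈ Finset.range k, F (ω ^ j * ζ)‖ ≤ ∑ j ∈ Finset.range k, ‖F (ω ^ j * ζ)‖ :=
        norm_sum_le _ _
    _ < ∑ j ∈ Finset.range k, 1 := Finset.sum_lt_sum_of_nonempty (by simpa using hk)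
        fun j _ ↦ mem_ball_zero_iff.mp (hF (hmem j))
    _ = k := by simp

theorem norm_coeff_le_one_sub_sq
    (hsum : ∀ z ∈ ball (0 : ℂ) 1, HasSum (fun m ↦ c m * z ^ m) (F z))
    (hF : MapsTo F (ball 0 1) (ball 0 1)) {k : ℕ} (hk : k ≠ 0) :
    ‖c k‖ ≤ 1 - ‖c 0‖ ^ 2 := by
  choose! G hGmem hG using fun w (hw : w ∈ ball (0 : ℂ) 1) ↦
    exists_hasSum_multisection_mem_ball hsum hF hk hw
  have hps := hasFPowerSeriesOnBall_ofScalars_of_hasSum one_pos hG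
  have hd : DifferentiableOn ℂ G (ball 0 1) := by
    simpa only [eball_coe, NNReal.coe_one] using hps.differentiableOn
  have hG0 : G 0 = c 0 := by
    simpa using (hps.coeff_zero fun _ ↦ 0).symm
  have hderiv : deriv G 0 = c k := by
    simpa [FormalMultilinearSeries.ofScalars_apply_eq] using hps.hasFPowerSeriesAt.deriv
  simpa [hG0, hderiv] using norm_deriv_zero_le_one_sub_sq_of_mapsTo_ball hd hGmem

end Coefficients

theorem tsum_mul_pow_add_le {b : ℕ → ℝ} {B r : ℝ} (N : ℕ) (hb0 : ∀ k, 0 ≤ b k)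
    (hb : ∀ k, b k ≤ B) (hr0 : 0 ≤ r) (hr1 : r < 1) :
    ∑' k, b k * r ^ (N + k) ≤ B * r ^ N / (1 - r) := by
  have hgeom : HasSum (fun k ↦ B * r ^ N * r ^ k) (B * r ^ N / (1 - r)) := by
    simpa [div_eq_mul_inv] using (hasSum_geometric_of_lt_one hr0 hr1).mul_left (B * r ^ N)
  have hle : ∀ k, b k * r ^ (N + k) ≤ B * r ^ N * r ^ k := fun k ↦ by
    rw [pow_add, mul_assoc B]
    exact mul_le_mul_of_nonneg_right (hb k) (by positivity)
  have hsumm : Summable fun k ↦ b k * r ^ (N + k) :=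
    hgeom.summable.of_nonneg_of_le (fun k ↦ mul_nonneg (hb0 k) (by positivity)) hle
  exact hasSum_le hle hsumm.hasSum hgeom

theorem sq_add_le_one_of_mul_le_of_le_div {A r ρ t S : ℝ} (hA0 : 0 ≤ A) (hA1 : A < 1)
    (hr0 : 0 ≤ r) (hr1 : r < 1) (ht0 : 0 ≤ t) (ht : t * (1 + A * r) ≤ A + r)
    (hS : S ≤ (1 - A ^ 2) * ρ / (1 - r)) (hρ : (1 + r) * ρ ≤ (1 - r) ^ 2) :
    t ^ 2 + S ≤ 1 := by
  have hAr : 0 < 1 + A * r := by positivity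
  have ht2 : t ^ 2 ≤ (A + r) ^ 2 / (1 + A * r) ^ 2 := by
    rw [le_div_iff₀ (by positivity), ← mul_pow]
    exact pow_le_pow_left₀ (by positivity) ht 2
  have hS2 : S ≤ (1 - A ^ 2) * (1 - r ^ 2) / (1 + A * r) ^ 2 := by
    refine hS.trans ?_
    rw [div_le_div_iff₀ (by linarith) (by positivity)]
    have hρ' : ρ * (1 + A * r) ^ 2 ≤ (1 - r ^ 2) * (1 - r) := by
      rcases le_or_gt 0 ρ with hρ0 | hρ0
      · have h1 : (1 + A * r) ^ 2 ≤ (1 + r) ^ 2 :=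
          pow_le_pow_left₀ hAr.le (by nlinarith) 2
        nlinarith [mul_le_mul_of_nonneg_left h1 hρ0]
      · nlinarith [mul_nonneg (sub_nonneg.mpr hr1.le) (sub_nonneg.mpr hr1.le)]
    nlinarith [mul_le_mul_of_nonneg_left hρ' (by nlinarith : (0:ℝ) ≤ 1 - A ^ 2)]
  calc t ^ 2 + S ≤ (A + r) ^ 2 / (1 + A * r) ^ 2 + (1 - A ^ 2) * (1 - r ^ 2) / (1 + A * r) ^ 2 :=
        add_le_add ht2 hS2
    _ = 1 := by
      field_simp
      ring

theorem bohr_rogosinski_radius_sq_general (f : ℂ → ℂ) (a : ℕ → ℂ)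
    (hsum : ∀ z ∈ ball (0:ℂ) 1, HasSum (fun k : ℕ => a k * z ^ k) (f z))
    (hbound : ∀ z ∈ ball (0:ℂ) 1, ‖f z‖ < 1)
    (N : ℕ) (hN : 1 ≤ N)
    (r : ℝ) (hr0 : 0 ≤ r) (hr1 : r < 1)
    (hroot : (1 + r) * r ^ N ≤ (1 - r) ^ 2)
    (z : ℂ) (hz : ‖z‖ = r) :
    ‖f z‖ ^ 2 + ∑' k : ℕ, ‖a (N + k)‖ * r ^ (N + k) ≤ 1 := by
  have hF : MapsTo f (ball 0 1) (ball 0 1) := fun w hw ↦ mem_ball_zero_iff.mpr (hbound w hw)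
  have hps := hasFPowerSeriesOnBall_ofScalars_of_hasSum one_pos hsum
  have hf0 : f 0 = a 0 := by simpa using (hps.coeff_zero fun _ ↦ 0).symm
  have hd : DifferentiableOn ℂ f (ball 0 1) := by
    simpa only [eball_coe, NNReal.coe_one] using hps.differentiableOn
  have hval := norm_mul_one_add_le_add_of_mapsTo_ball hd hF (hz ▸ hr1)
  rw [hf0, hz] at hval
  have htail := tsum_mul_pow_add_le N (fun k ↦ norm_nonneg (a (N + k)))
    (fun k ↦ norm_coeff_le_one_sub_sq hsum hF (by omega : N + k ≠ 0)) hr0 hr1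
  exact sq_add_le_one_of_mul_le_of_le_div (norm_nonneg _)
    (hf0 ▸ hbound 0 (mem_ball_self one_pos)) hr0 hr1 (norm_nonneg _) hval htail hroot

/-- Theorem 1, second part: if `f` is analytic on the unit disk with `|f| < 1` and
`(1+r)r^N ≤ (1-r)^2`, then `|f(z)|^2 + ∑_{k=N}^∞ |a_k| r^k ≤ 1` for `|z| = r`. -/
theorem bohr_rogosinski_radius_sq (f : ℂ → ℂ) (a : ℕ → ℂ)
    (hf : AnalyticOn ℂ f (ball (0:ℂ) 1))
    (hsum : ∀ z ∈ ball (0:ℂ) 1, HasSum (fun k : ℕ => a k * z ^ k) (f z))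
    (hbound : ∀ z ∈ ball (0:ℂ) 1, ‖f z‖ < 1)
    (N : ℕ) (hN : 1 ≤ N)
    (r : ℝ) (hr0 : 0 ≤ r) (hr1 : r < 1)
    (hroot : (1 + r) * r ^ N ≤ (1 - r) ^ 2)
    (z : ℂ) (hz : ‖z‖ = r) :
    ‖f z‖ ^ 2 + ∑' k : ℕ, ‖a (N + k)‖ * r ^ (N + k) ≤ 1 :=
  bohr_rogosinski_radius_sq_general f a hsum hbound N hN r hr0 hr1 hroot z hz
end

section
/- Let N ≥ 1 be an integer and let R_N' be the positive root of (1+r)r^N - (1-r)^2 = 0. For every r with R_N' < r < 1 there exists a function f analytic on the open unit disk D with |f(z)| < 1 on D (one may take f(z) = (a-z)/(1-az) with a ∈ [0,1) close enough to 1) and a point z with |z| = r such that |f(z)|^2 + ∑_{k=N}^∞ |a_k| r^k > 1, where a_k are the Taylor coefficients of f. Hence the radius R_N' is best possible. -/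
/-!
Take the Möbius map `f_a(z) = (a - z)/(1 - a z)` with `0 < a < 1` and `z = -r`. Then
`|f_a(-r)| = (a + r)/(1 + a r)` and `∑_{k ≥ N} |a_k| r^k = (1 - a²) a^(N-1) r^N / (1 - a r)`,
and `|f_a(-r)|² + ∑_{k ≥ N} |a_k| r^k - 1` equals `(1 - a²) g(a)` divided by a positive number,
where `g(a) = a^(N-1) r^N (1 + a r)² - (1 - r²)(1 - a r)`. Since
`g(1) = (1 + r)((1 + r) r^N - (1 - r)²)` is positive exactly when `r > R_N'`, continuity gives
`g(a) > 0` for `a` close to `1`.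
-/

open Metric Filter Topology

noncomputable def mobius (a : ℝ) (z : ℂ) : ℂ := (a - z) / (1 - a * z)

def mobiusCoeff (a : ℝ) : ℕ → ℝ
  | 0 => a
  | k + 1 => -(1 - a ^ 2) * a ^ k

lemma one_sub_ne_zero_of_norm_lt_one {A : Type*} [NormedRing A] [NormOneClass A] {x : A}
    (hx : ‖x‖ < 1) : 1 - x ≠ 0 := by
  intro h
  rw [← sub_eq_zero.mp h, norm_one] at hx
  exact lt_irrefl _ hx

namespace Mobius

variable {a : ℝ}

lemma norm_mul_lt_one (ha : |a| ≤ 1) {z : ℂ} (hz : ‖z‖ < 1) : ‖(a : ℂ) * z‖ < 1 := by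
  rw [norm_mul, Complex.norm_real, Real.norm_eq_abs]
  nlinarith [abs_nonneg a, norm_nonneg z]

lemma analyticOnNhd (ha : |a| ≤ 1) : AnalyticOnNhd ℂ (mobius a) (ball 0 1) :=
  (analyticOnNhd_const.sub analyticOnNhd_id).div
    (analyticOnNhd_const.sub (analyticOnNhd_const.mul analyticOnNhd_id))
    fun _ hz ↦ one_sub_ne_zero_of_norm_lt_one (norm_mul_lt_one ha (mem_ball_zero_iff.mp hz))

lemma hasSum_coeff {z : ℂ} (haz : ‖(a : ℂ) * z‖ < 1) :
    HasSum (fun k ↦ (mobiusCoeff a k : ℂ) * z ^ k) (mobius a z) := by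
  have hgeom := (hasSum_geometric_of_norm_lt_one haz).mul_left (-(1 - (a : ℂ) ^ 2) * z)
  have hterm : ∀ k : ℕ, (mobiusCoeff a (k + 1) : ℂ) * z ^ (k + 1) =
      -(1 - (a : ℂ) ^ 2) * z * ((a : ℂ) * z) ^ k := fun k ↦ by
    simp only [mobiusCoeff]; push_cast; ring
  convert HasSum.zero_add (f := fun k ↦ (mobiusCoeff a k : ℂ) * z ^ k)
    (by simpa only [hterm] using hgeom) using 1
  have := one_sub_ne_zero_of_norm_lt_one haz
  simp only [mobius, mobiusCoeff, pow_zero, mul_one]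
  field_simp
  ring

lemma normSq_one_sub_mul_sub_normSq_sub (a : ℝ) (z : ℂ) :
    Complex.normSq (1 - a * z) - Complex.normSq (a - z) = (1 - a ^ 2) * (1 - Complex.normSq z) := by
  simp only [Complex.normSq_apply, Complex.sub_re, Complex.sub_im, Complex.mul_re,
    Complex.mul_im, Complex.ofReal_re, Complex.ofReal_im, Complex.one_re, Complex.one_im]
  ring

lemma norm_lt_one (ha : |a| < 1) {z : ℂ} (hz : ‖z‖ < 1) : ‖mobius a z‖ < 1 := by
  have hden := one_sub_ne_zero_of_norm_lt_one (norm_mul_lt_one ha.le hz)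
  rw [mobius, norm_div, div_lt_one (norm_pos_iff.mpr hden), Complex.norm_def, Complex.norm_def]
  apply Real.sqrt_lt_sqrt (Complex.normSq_nonneg _)
  have hz2 : Complex.normSq z < 1 := by rw [← Complex.sq_norm]; nlinarith [norm_nonneg z]
  have hpos : 0 < (1 - a ^ 2) * (1 - Complex.normSq z) :=
    mul_pos (by nlinarith [abs_nonneg a, sq_abs a]) (by linarith)
  linarith [normSq_one_sub_mul_sub_normSq_sub a z]

lemma neg_ofReal (a r : ℝ) : mobius a (-r) = ((a + r) / (1 + a * r) : ℝ) := by
  simp only [mobius]; push_cast; ring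

lemma abs_coeff_succ (ha0 : 0 ≤ a) (ha1 : a ≤ 1) (k : ℕ) :
    |mobiusCoeff a (k + 1)| = (1 - a ^ 2) * a ^ k := by
  rw [mobiusCoeff, neg_mul, abs_neg, abs_of_nonneg (mul_nonneg (by nlinarith) (pow_nonneg ha0 k))]

lemma hasSum_abs_coeff_mul_pow_tail (ha0 : 0 ≤ a) (ha1 : a ≤ 1) {r : ℝ} (hr : 0 ≤ r)
    (har : a * r < 1) (M : ℕ) :
    HasSum (fun k ↦ |mobiusCoeff a (M + 1 + k)| * r ^ (M + 1 + k))
      ((1 - a ^ 2) * a ^ M * r ^ (M + 1) / (1 - a * r)) := by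
  have hterm : ∀ k, |mobiusCoeff a (M + 1 + k)| * r ^ (M + 1 + k) =
      (1 - a ^ 2) * a ^ M * r ^ (M + 1) * (a * r) ^ k := fun k ↦ by
    rw [add_right_comm, abs_coeff_succ ha0 ha1, pow_add, pow_add, mul_pow]
    ring
  simpa only [hterm, div_eq_mul_inv] using
    (hasSum_geometric_of_lt_one (by positivity) har).mul_left ((1 - a ^ 2) * a ^ M * r ^ (M + 1))

end Mobius

lemma one_sub_sq_lt_of_root_lt {N : ℕ} (hN : N ≠ 0) {R r : ℝ} (hR : 0 ≤ R) (hRr : R < r)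
    (hr : r < 1) (hroot : (1 + R) * R ^ N = (1 - R) ^ 2) : (1 - r) ^ 2 < (1 + r) * r ^ N := by
  have hpow : R ^ N < r ^ N := pow_lt_pow_left₀ hRr hR hN
  nlinarith [pow_nonneg hR N]

lemma sq_div_add_tail_sub_one {a r : ℝ} (M : ℕ) (h₁ : 1 + a * r ≠ 0)
    (h₂ : 1 - a * r ≠ 0) :
    ((a + r) / (1 + a * r)) ^ 2 + (1 - a ^ 2) * a ^ M * r ^ (M + 1) / (1 - a * r) - 1 =
      (1 - a ^ 2) * (a ^ M * r ^ (M + 1) * (1 + a * r) ^ 2 - (1 - r ^ 2) * (1 - a * r)) /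
        ((1 - a * r) * (1 + a * r) ^ 2) := by
  field_simp
  ring

lemma eventually_one_lt_sq_div_add_tail {r : ℝ} (hr0 : 0 ≤ r) (hr1 : r < 1) {M : ℕ}
    (hr : (1 - r) ^ 2 < (1 + r) * r ^ (M + 1)) :
    ∀ᶠ a in 𝓝[<] 1, 1 < ((a + r) / (1 + a * r)) ^ 2 +
      (1 - a ^ 2) * a ^ M * r ^ (M + 1) / (1 - a * r) := by
  have hg : ∀ᶠ a in 𝓝 (1 : ℝ),
      0 < a ^ M * r ^ (M + 1) * (1 + a * r) ^ 2 - (1 - r ^ 2) * (1 - a * r) := by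
    refine ContinuousAt.eventually_lt (by fun_prop) (by fun_prop) ?_
    have := mul_pos (by linarith : (0 : ℝ) < 1 + r) (sub_pos.mpr hr)
    linear_combination this
  have hpos : ∀ᶠ a in 𝓝 (1 : ℝ), 0 < a := eventually_gt_nhds one_pos
  filter_upwards [nhdsWithin_le_nhds (hg.and hpos), self_mem_nhdsWithin]
    with a ⟨hga, ha0⟩ (ha1 : a < 1)
  have har : a * r < 1 := by nlinarith
  rw [← sub_pos, sq_div_add_tail_sub_one M (by positivity) (by linarith)]
  exact div_pos (mul_pos (by nlinarith) hga) (mul_pos (by linarith) (by positivity))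

/-- Theorem 1, sharpness of the radius `R_N'`: if `R` is the root in `(0,1)` of
`(1+r)r^N = (1-r)^2`, then for every `r` with `R < r < 1` there is an analytic
self-map of the disk violating the inequality `|f(z)|^2 + ∑_{k=N}^∞ |a_k| r^k ≤ 1`
at radius `r`. -/
theorem bohr_rogosinski_radius_sq_sharp (N : ℕ) (hN : 1 ≤ N)
    (R : ℝ) (hR : R ∈ Set.Ioo (0:ℝ) 1)
    (hroot : (1 + R) * R ^ N = (1 - R) ^ 2)
    (r : ℝ) (hrR : R < r) (hr1 : r < 1) :
    ∃ (f : ℂ → ℂ) (a : ℕ → ℂ),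
      AnalyticOn ℂ f (ball (0:ℂ) 1) ∧
      (∀ z ∈ ball (0:ℂ) 1, HasSum (fun k : ℕ => a k * z ^ k) (f z)) ∧
      (∀ z ∈ ball (0:ℂ) 1, ‖f z‖ < 1) ∧
      ∃ z : ℂ, ‖z‖ = r ∧
        1 < (‖f z‖) ^ 2 + ∑' k : ℕ, ‖a (N + k)‖ * r ^ (N + k) := by
  obtain ⟨M, rfl⟩ : ∃ M, N = M + 1 := Nat.exists_eq_add_of_le' hN
  have hr0 : 0 ≤ r := hR.1.le.trans hrR.le
  have hr := one_sub_sq_lt_of_root_lt (Nat.succ_ne_zero M) hR.1.le hrR hr1 hroot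
  have hpos : ∀ᶠ a in 𝓝[<] (1 : ℝ), 0 < a :=
    nhdsWithin_le_nhds (eventually_gt_nhds one_pos)
  obtain ⟨a, hlt, ha0, ha1 : a < 1⟩ := ((eventually_one_lt_sq_div_add_tail hr0 hr1 hr).and
    (hpos.and self_mem_nhdsWithin)).exists
  have ha : |a| < 1 := abs_lt.mpr ⟨by linarith, ha1⟩
  refine ⟨mobius a, fun k ↦ mobiusCoeff a k, (Mobius.analyticOnNhd ha.le).analyticOn,
    fun z hz ↦ Mobius.hasSum_coeff (Mobius.norm_mul_lt_one ha.le (mem_ball_zero_iff.mp hz)),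
    fun z hz ↦ Mobius.norm_lt_one ha (mem_ball_zero_iff.mp hz), -r, by simp [abs_of_nonneg hr0],
    ?_⟩
  have htail := Mobius.hasSum_abs_coeff_mul_pow_tail ha0.le ha1.le hr0 (by nlinarith) M
  simp only [Complex.norm_real, Real.norm_eq_abs] at htail ⊢
  rw [Mobius.neg_ofReal, Complex.norm_real, Real.norm_eq_abs,
    abs_of_nonneg (by positivity), htail.tsum_eq]
  exact hlt
end

section
/- Let f(z) = ∑_{k=0}^∞ a_k z^k be analytic on the open unit disk D with |f(z)| ≤ 1 for all z ∈ D. Then for every r with 0 ≤ r < 1: ∑_{k=1}^∞ k |a_k|^2 r^{2k} ≤ (1 - |a_0|^2)^2 r^2 / (1 - r^2)^2. Equivalently, the area S_r of the image of |z| < r under f satisfies S_r/π ≤ (1 - |a_0|^2)^2 r^2/(1 - r^2)^2. -/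
/-!
Wiener's inequality `‖a k‖ ≤ 1 - ‖a 0‖ ^ 2` for `k ≥ 1`: averaging `f` over the rotations
`z ↦ ζ ^ j * z` by the `k`-th roots of unity keeps exactly the coefficients `a (k * m)`, so
`h w = ∑ a (k * m) * w ^ m` is again bounded by `1` on the disk, with `h 0 = a 0` and
`h' 0 = a k`. The Schwarz–Pick inequality at the origin, `‖h' 0‖ ≤ 1 - ‖h 0‖ ^ 2`, gives the
bound. The area estimate then follows termwise from `∑ k * x ^ k = x / (1 - x) ^ 2`
at `x = r ^ 2`.
-/

open Metric Finset ComplexConjugate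

theorem IsPrimitiveRoot.sum_range_pow_pow {R : Type*} [CommRing R] [IsDomain R] {ζ : R} {k : ℕ}
    (hζ : IsPrimitiveRoot ζ k) (n : ℕ) :
    ∑ j ∈ range k, (ζ ^ j) ^ n = if k ∣ n then (k : R) else 0 := by
  simp_rw [← pow_mul, mul_comm _ n, pow_mul]
  split_ifs with hkn
  · simp [(hζ.pow_eq_one_iff_dvd n).mpr hkn]
  · have hne : ζ ^ n - 1 ≠ 0 := sub_ne_zero.mpr fun h => hkn ((hζ.pow_eq_one_iff_dvd n).mp h)
    have hroot : (ζ ^ n) ^ k = 1 := by rw [← pow_mul, mul_comm, pow_mul, hζ.pow_eq_one, one_pow]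
    have hgeom := mul_geom_sum (ζ ^ n) k
    rw [hroot, sub_self] at hgeom
    exact (mul_eq_zero.mp hgeom).resolve_left hne

theorem IsPrimitiveRoot.pow_mul_mem_ball {ζ z : ℂ} {k : ℕ} {R : ℝ} (hζ : IsPrimitiveRoot ζ k)
    (hk : k ≠ 0) (j : ℕ) (hz : z ∈ ball (0 : ℂ) R) : ζ ^ j * z ∈ ball (0 : ℂ) R := by
  simpa [norm_mul, norm_pow, hζ.norm'_eq_one hk] using hz

theorem Complex.exists_pow_eq_of_mem_ball_one {k : ℕ} (hk : k ≠ 0) {w : ℂ}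
    (hw : w ∈ ball (0 : ℂ) 1) : ∃ z ∈ ball (0 : ℂ) 1, z ^ k = w := by
  obtain ⟨z, rfl⟩ := IsAlgClosed.exists_pow_nat_eq w (Nat.pos_of_ne_zero hk)
  exact ⟨z, by simpa [norm_pow, pow_lt_one_iff_of_nonneg (norm_nonneg z) hk] using hw, rfl⟩

theorem hasSum_multisection {a : ℕ → ℂ} {f : ℂ → ℂ} {R : ℝ}
    (hsum : ∀ z ∈ ball (0 : ℂ) R, HasSum (fun n => a n * z ^ n) (f z))
    {k : ℕ} (hk : k ≠ 0) {ζ : ℂ} (hζ : IsPrimitiveRoot ζ k) {z : ℂ} (hz : z ∈ ball (0 : ℂ) R) :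
    HasSum (fun m => a (k * m) * (z ^ k) ^ m) ((k : ℂ)⁻¹ * ∑ j ∈ range k, f (ζ ^ j * z)) := by
  have hfiltered : HasSum (fun n => if k ∣ n then (k : ℂ) * (a n * z ^ n) else 0)
      (∑ j ∈ range k, f (ζ ^ j * z)) := by
    convert hasSum_sum fun (j : ℕ) _ => hsum _ (hζ.pow_mul_mem_ball hk j hz) using 1
    funext n
    simp_rw [mul_pow, ← mul_assoc, ← sum_mul, ← mul_sum, hζ.sum_range_pow_pow]
    split_ifs <;> ring
  have hsub : HasSum (fun m => (k : ℂ) * (a (k * m) * z ^ (k * m)))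
      (∑ j ∈ range k, f (ζ ^ j * z)) := by
    refine ((mul_right_injective₀ hk).hasSum_iff ?_).mpr hfiltered |>.congr_fun ?_
    · rintro n hn
      rw [if_neg fun ⟨m, hm⟩ => hn ⟨m, hm.symm⟩]
    · intro m
      simp
  refine (hsub.mul_left (k : ℂ)⁻¹).congr_fun fun m => ?_
  rw [← mul_assoc, inv_mul_cancel₀ (Nat.cast_ne_zero.mpr hk), one_mul, pow_mul]

theorem hasFPowerSeriesOnBall_ofScalarsSum {b : ℕ → ℂ} {R : NNReal} (hR : 0 < R)
    (hb : ∀ z ∈ ball (0 : ℂ) R, Summable fun n => b n * z ^ n) :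
    HasFPowerSeriesOnBall (FormalMultilinearSeries.ofScalarsSum b)
      (FormalMultilinearSeries.ofScalars ℂ b) 0 R := by
  set p := FormalMultilinearSeries.ofScalars ℂ b
  have hradius : (R : ENNReal) ≤ p.radius := by
    refine ENNReal.le_of_forall_nnreal_lt fun t ht => p.le_radius_of_tendsto (l := 0) ?_
    have ht' : (t : ℂ) ∈ ball (0 : ℂ) R := by simpa using ht
    simpa [p, FormalMultilinearSeries.ofScalars_norm] using
      ((hb _ ht').tendsto_atTop_zero).norm
  exact (p.hasFPowerSeriesOnBall (lt_of_lt_of_le (by exact_mod_cast hR) hradius)).mono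
    (by exact_mod_cast hR) hradius

/-- From `‖1 - conj c * u‖ ^ 2 - ‖u - c‖ ^ 2 = (1 - ‖c‖ ^ 2) * (1 - ‖u‖ ^ 2)`. -/
theorem Complex.norm_sub_le_norm_one_sub_conj_mul {u c : ℂ} (hu : ‖u‖ ≤ 1) (hc : ‖c‖ ≤ 1) :
    ‖u - c‖ ≤ ‖1 - conj c * u‖ := by
  have hu' : Complex.normSq u ≤ 1 := by rw [Complex.normSq_eq_norm_sq]; nlinarith [norm_nonneg u]
  have hc' : Complex.normSq c ≤ 1 := by rw [Complex.normSq_eq_norm_sq]; nlinarith [norm_nonneg c]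
  rw [Complex.norm_def, Complex.norm_def]
  apply Real.sqrt_le_sqrt
  rw [Complex.normSq_apply] at hu' hc'
  simp only [Complex.normSq_apply, Complex.sub_re, Complex.sub_im, Complex.one_re, Complex.one_im,
    Complex.mul_re, Complex.mul_im, Complex.conj_re, Complex.conj_im]
  nlinarith [mul_nonneg (sub_nonneg.mpr hc') (sub_nonneg.mpr hu')]

theorem Complex.norm_deriv_le_one_sub_norm_sq_of_norm_lt_one {g : ℂ → ℂ}
    (hd : DifferentiableOn ℂ g (ball 0 1)) (hg : Set.MapsTo g (ball 0 1) (closedBall 0 1))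
    (hg0 : ‖g 0‖ < 1) : ‖deriv g 0‖ ≤ 1 - ‖g 0‖ ^ 2 := by
  set c := g 0
  have hden : ∀ w ∈ ball (0 : ℂ) 1, 1 - conj c * g w ≠ 0 := by
    intro w hw h
    have hlt : ‖conj c * g w‖ < 1 := by
      rw [norm_mul, Complex.norm_conj]
      exact lt_of_le_of_lt (mul_le_of_le_one_right (norm_nonneg _) (by simpa using hg hw)) hg0
    rw [← sub_eq_zero.mp h, norm_one] at hlt
    exact hlt.false
  set G : ℂ → ℂ := fun w => (g w - c) / (1 - conj c * g w)
  have hGd : DifferentiableOn ℂ G (ball 0 1) :=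
    (hd.sub_const c).div ((differentiableOn_const 1).sub ((differentiableOn_const _).mul hd)) hden
  have hGmaps : Set.MapsTo G (ball 0 1) (closedBall (G 0) 1) := by
    intro w hw
    rw [mem_closedBall, dist_eq_norm, show G 0 = 0 by simp [G, c], sub_zero, norm_div]
    exact div_le_one_of_le₀
      (Complex.norm_sub_le_norm_one_sub_conj_mul (by simpa using hg hw) hg0.le) (norm_nonneg _)
  have hden0 : 1 - conj c * c = ((1 - ‖c‖ ^ 2 : ℝ) : ℂ) := by
    rw [mul_comm, Complex.mul_conj, Complex.normSq_eq_norm_sq]; push_cast; ring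
  have hpos : 0 < 1 - ‖c‖ ^ 2 := by nlinarith [norm_nonneg c]
  have hGderiv : deriv G 0 = deriv g 0 / ((1 - ‖c‖ ^ 2 : ℝ) : ℂ) := by
    have hg' : HasDerivAt g (deriv g 0) 0 :=
      (hd.differentiableAt (isOpen_ball.mem_nhds (mem_ball_self one_pos))).hasDerivAt
    have hG' : HasDerivAt G ((deriv g 0 * (1 - conj c * c) - (c - c) * -(conj c * deriv g 0)) /
        (1 - conj c * c) ^ 2) 0 :=
      (hg'.sub_const c).div ((hg'.const_mul (conj c)).const_sub 1) (hden 0 (mem_ball_self one_pos))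
    rw [hG'.deriv, sub_self, zero_mul, sub_zero, ← hden0]
    have hne : 1 - conj c * c ≠ 0 := by rw [hden0]; exact_mod_cast hpos.ne'
    field_simp
  have hschwarz := Complex.norm_deriv_le_div_of_mapsTo_ball hGd hGmaps one_pos
  rwa [hGderiv, norm_div, Complex.norm_real, Real.norm_of_nonneg hpos.le, div_one,
    div_le_one hpos] at hschwarz

theorem Complex.norm_deriv_le_one_sub_norm_sq {g : ℂ → ℂ}
    (hd : DifferentiableOn ℂ g (ball 0 1)) (hg : Set.MapsTo g (ball 0 1) (closedBall 0 1)) :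
    ‖deriv g 0‖ ≤ 1 - ‖g 0‖ ^ 2 := by
  have h0 : (0 : ℂ) ∈ ball (0 : ℂ) 1 := mem_ball_self one_pos
  rcases (show ‖g 0‖ ≤ 1 by simpa using hg h0).lt_or_eq with hlt | heq
  · exact Complex.norm_deriv_le_one_sub_norm_sq_of_norm_lt_one hd hg hlt
  · have hmax : IsMaxOn (norm ∘ g) (ball 0 1) 0 := fun w hw => by
      simpa [heq] using hg hw
    have hconst : g =ᶠ[nhds 0] fun _ => g 0 :=
      Filter.eventually_of_mem (isOpen_ball.mem_nhds h0) <|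
        Complex.eqOn_of_isPreconnected_of_isMaxOn_norm (convex_ball 0 1).isPreconnected
          isOpen_ball hd h0 hmax
    simp [hconst.deriv_eq, heq]

theorem norm_coeff_le_one_sub_norm_sq_coeff_zero {a : ℕ → ℂ} {f : ℂ → ℂ}
    (hsum : ∀ z ∈ ball (0 : ℂ) 1, HasSum (fun n => a n * z ^ n) (f z))
    (hbound : ∀ z ∈ ball (0 : ℂ) 1, ‖f z‖ ≤ 1) {k : ℕ} (hk : k ≠ 0) :
    ‖a k‖ ≤ 1 - ‖a 0‖ ^ 2 := by
  have hζ := Complex.isPrimitiveRoot_exp k hk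
  set ζ := Complex.exp (2 * Real.pi * Complex.I / k)
  set h := FormalMultilinearSeries.ofScalarsSum (E := ℂ) fun m => a (k * m)
  have hsection : ∀ z ∈ ball (0 : ℂ) 1, HasSum (fun m => a (k * m) * (z ^ k) ^ m)
      ((k : ℂ)⁻¹ * ∑ j ∈ range k, f (ζ ^ j * z)) :=
    fun z hz => hasSum_multisection hsum hk hζ hz
  have hps : HasFPowerSeriesOnBall h (FormalMultilinearSeries.ofScalars ℂ fun m => a (k * m))
      0 (1 : NNReal) :=
    hasFPowerSeriesOnBall_ofScalarsSum one_pos fun w hw => by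
      obtain ⟨z, hz, rfl⟩ := Complex.exists_pow_eq_of_mem_ball_one hk (by simpa using hw)
      exact (hsection z hz).summable
  have hmaps : Set.MapsTo h (ball 0 1) (closedBall 0 1) := by
    intro w hw
    obtain ⟨z, hz, rfl⟩ := Complex.exists_pow_eq_of_mem_ball_one hk hw
    have hval : h (z ^ k) = (k : ℂ)⁻¹ * ∑ j ∈ range k, f (ζ ^ j * z) := by
      simpa [h, FormalMultilinearSeries.ofScalarsSum_eq_tsum] using (hsection z hz).tsum_eq
    rw [mem_closedBall_zero_iff, hval, norm_mul, norm_inv, Complex.norm_natCast]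
    calc (k : ℝ)⁻¹ * ‖∑ j ∈ range k, f (ζ ^ j * z)‖
        ≤ (k : ℝ)⁻¹ * ∑ j ∈ range k, (1 : ℝ) := by
          gcongr
          exact (norm_sum_le _ _).trans
            (sum_le_sum fun j _ => hbound _ (hζ.pow_mul_mem_ball hk j hz))
      _ = 1 := by simp [hk]
  have hd : DifferentiableOn ℂ h (ball 0 1) := by
    have := hps.differentiableOn
    rwa [Metric.eball_coe, NNReal.coe_one] at this
  have h0 : h 0 = a 0 := by simp [h, FormalMultilinearSeries.ofScalarsSum_zero]
  have hderiv : deriv h 0 = a k := by simp [hps.hasFPowerSeriesAt.deriv]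
  have hschwarz_pick := Complex.norm_deriv_le_one_sub_norm_sq hd hmaps
  rwa [h0, hderiv] at hschwarz_pick

theorem area_bound_general (f : ℂ → ℂ) (a : ℕ → ℂ)
    (hsum : ∀ z ∈ ball (0:ℂ) 1, HasSum (fun k : ℕ => a k * z ^ k) (f z))
    (hbound : ∀ z ∈ ball (0:ℂ) 1, ‖f z‖ ≤ 1)
    (r : ℝ) (hr0 : 0 ≤ r) (hr1 : r < 1) :
    ∑' k : ℕ, (k : ℝ) * ‖a k‖ ^ 2 * r ^ (2 * k) ≤
      (1 - ‖a 0‖ ^ 2) ^ 2 * r ^ 2 / (1 - r ^ 2) ^ 2 := by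
  set B := 1 - ‖a 0‖ ^ 2
  have hterm : ∀ k : ℕ, (k : ℝ) * ‖a k‖ ^ 2 * r ^ (2 * k) ≤ B ^ 2 * (k * (r ^ 2) ^ k) := by
    intro k
    rcases eq_or_ne k 0 with rfl | hk
    · simp
    calc (k : ℝ) * ‖a k‖ ^ 2 * r ^ (2 * k) = ‖a k‖ ^ 2 * (k * (r ^ 2) ^ k) := by ring
      _ ≤ B ^ 2 * (k * (r ^ 2) ^ k) := by
        gcongr
        exact norm_coeff_le_one_sub_norm_sq_coeff_zero hsum hbound hk
  have hr2 : ‖r ^ 2‖ < 1 := by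
    rw [Real.norm_of_nonneg (sq_nonneg r)]
    nlinarith
  have hgeom := (hasSum_coe_mul_geometric_of_norm_lt_one hr2).mul_left (B ^ 2)
  have hsummable : Summable fun k : ℕ => (k : ℝ) * ‖a k‖ ^ 2 * r ^ (2 * k) :=
    Summable.of_nonneg_of_le (fun k => by positivity) hterm hgeom.summable
  calc ∑' k : ℕ, (k : ℝ) * ‖a k‖ ^ 2 * r ^ (2 * k) ≤ B ^ 2 * (r ^ 2 / (1 - r ^ 2) ^ 2) :=
        hasSum_le hterm hsummable.hasSum hgeom
    _ = B ^ 2 * r ^ 2 / (1 - r ^ 2) ^ 2 := by ring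

/-- Area bound via Wiener's inequality: if `f` is analytic on the unit disk with
`|f| ≤ 1`, then for `0 ≤ r < 1`,
`S_r/π = ∑_{k=1}^∞ k |a_k|^2 r^{2k} ≤ (1-|a_0|^2)^2 r^2 / (1-r^2)^2`. -/
theorem area_bound (f : ℂ → ℂ) (a : ℕ → ℂ)
    (hf : AnalyticOn ℂ f (ball (0:ℂ) 1))
    (hsum : ∀ z ∈ ball (0:ℂ) 1, HasSum (fun k : ℕ => a k * z ^ k) (f z))
    (hbound : ∀ z ∈ ball (0:ℂ) 1, ‖f z‖ ≤ 1)
    (r : ℝ) (hr0 : 0 ≤ r) (hr1 : r < 1) :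
    ∑' k : ℕ, (k : ℝ) * ‖a k‖ ^ 2 * r ^ (2 * k) ≤
      (1 - ‖a 0‖ ^ 2) ^ 2 * r ^ 2 / (1 - r ^ 2) ^ 2 :=
  area_bound_general f a hsum hbound r hr0 hr1
end
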